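/- arXiv:1311.2683 — 7 statements merged into one kernel-verified Lean document; each statement's English description precedes it below -/
import Mathlib

section
/- Let A be an algebra with congruences γ ≤ β, and let U ⊆ A be a subset such that every finitary operation on U is the restriction of a polynomial operation of A. If the term condition TC(α, β; γ) fails, witnessed by a term t and tuples a₁ ≡_α a₂, b̄₁ ≡_β b̄₂ with all entries of b̄₁, b̄₂ in U, then there is a witnessing failure in which the β-shifted tuples differ in only one coordinate; that is, there exist a polynomial s(x, y) and elements b, b' ∈ U with b ≡_β b' such that s(a₁, b) = s(a₁, b') but s(a₂, b) ≠ s(a₂, b'). -/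
/-- A purely functional first-order signature. -/
structure Signature where
  ops : Type
  arity : ops → ℕ

/-- An algebra for a signature: an interpretation of each operation symbol. -/
structure UAlg (σ : Signature) (A : Type) where
  interp : ∀ o : σ.ops, (Fin (σ.arity o) → A) → A

/-- Terms in `n` variables over a signature. -/
inductive Term (σ : Signature) (n : ℕ) : Type
  | var : Fin n → Term σ n
  | op : (o : σ.ops) → (Fin (σ.arity o) → Term σ n) → Term σ n

/-- Evaluation of a term at a tuple. -/
def Term.eval {σ : Signature} {A : Type} (Alg : UAlg σ A) {n : ℕ} :
    Term σ n → (Fin n → A) → A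
  | .var i, v => v i
  | .op o ts, v => Alg.interp o fun j => (ts j).eval Alg v

/-- A congruence: an equivalence relation compatible with all operations. -/
def IsCongruence {σ : Signature} {A : Type} (Alg : UAlg σ A) (r : A → A → Prop) : Prop :=
  Equivalence r ∧ ∀ (o : σ.ops) (x y : Fin (σ.arity o) → A),
    (∀ i, r (x i) (y i)) → r (Alg.interp o x) (Alg.interp o y)

/-- A `k`-ary polynomial operation: a term operation with parameters. -/
def IsPolynomial {σ : Signature} {A : Type} (Alg : UAlg σ A) {k : ℕ}
    (f : (Fin k → A) → A) : Prop :=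
  ∃ (n : ℕ) (t : Term σ (k + n)) (params : Fin n → A),
    ∀ x : Fin k → A, f x = t.eval Alg (Fin.append x params)

/-- A unary polynomial operation. -/
def IsUnaryPolynomial {σ : Signature} {A : Type} (Alg : UAlg σ A) (f : A → A) : Prop :=
  IsPolynomial Alg (k := 1) fun x => f (x 0)

/-- The term condition TermCond(α, β; γ). -/
def TermCond {σ : Signature} {A : Type} (Alg : UAlg σ A) (α β γ : A → A → Prop) : Prop :=
  ∀ (n m : ℕ) (t : Term σ (n + m)) (a₁ a₂ : Fin n → A) (b₁ b₂ : Fin m → A),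
    (∀ i, α (a₁ i) (a₂ i)) → (∀ i, β (b₁ i) (b₂ i)) →
    γ (t.eval Alg (Fin.append a₁ b₁)) (t.eval Alg (Fin.append a₁ b₂)) →
    γ (t.eval Alg (Fin.append a₂ b₁)) (t.eval Alg (Fin.append a₂ b₂))

/-- β is strongly abelian over γ. -/
def StronglyAbelianOver {σ : Signature} {A : Type} (Alg : UAlg σ A)
    (β γ : A → A → Prop) : Prop :=
  ∀ (n m : ℕ) (t : Term σ (n + m)) (a₁ a₂ : Fin n → A) (b₁ b₂ b₃ : Fin m → A),
    (∀ i, β (a₁ i) (a₂ i)) → (∀ i, β (b₁ i) (b₂ i)) → (∀ i, β (b₂ i) (b₃ i)) →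
    γ (t.eval Alg (Fin.append a₁ b₁)) (t.eval Alg (Fin.append a₂ b₂)) →
    γ (t.eval Alg (Fin.append a₁ b₃)) (t.eval Alg (Fin.append a₂ b₃))

/-- The least congruence containing a binary relation. -/
def congClosure {σ : Signature} {A : Type} (Alg : UAlg σ A) (R : A → A → Prop) :
    A → A → Prop :=
  fun a b => ∀ r, IsCongruence Alg r → (∀ x y, R x y → r x y) → r a b

/-- A subset closed under the operations. -/
def IsSubalgebra {σ : Signature} {A : Type} (Alg : UAlg σ A) (s : Set A) : Prop :=
  ∀ (o : σ.ops) (x : Fin (σ.arity o) → A), (∀ j, x j ∈ s) → Alg.interp o x ∈ s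

/-- The power algebra `A^I`. -/
def UAlg.pow {σ : Signature} {A : Type} (Alg : UAlg σ A) (I : Type) :
    UAlg σ (I → A) :=
  ⟨fun o x i => Alg.interp o fun j => x j i⟩

/-- The product of a family of algebras. -/
def UAlg.pi {σ : Signature} {ι : Type} {A : ι → Type} (Alg : ∀ i, UAlg σ (A i)) :
    UAlg σ (∀ i, A i) :=
  ⟨fun o x i => (Alg i).interp o fun j => x j i⟩

/-- The binary product of two algebras. -/
def UAlg.prod2 {σ : Signature} {A B : Type} (AlgA : UAlg σ A) (AlgB : UAlg σ B) :
    UAlg σ (A × B) :=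
  ⟨fun o x => (AlgA.interp o fun j => (x j).1, AlgB.interp o fun j => (x j).2)⟩

/-- The algebra structure on a subalgebra. -/
def UAlg.sub {σ : Signature} {A : Type} (Alg : UAlg σ A) (s : Set A)
    (hs : IsSubalgebra Alg s) : UAlg σ s :=
  ⟨fun o x => ⟨Alg.interp o fun j => (x j : A), hs o _ fun j => (x j).2⟩⟩

/-- Homomorphisms of algebras. -/
def IsHom {σ : Signature} {A B : Type} (AlgA : UAlg σ A) (AlgB : UAlg σ B)
    (f : A → B) : Prop :=
  ∀ (o : σ.ops) (x : Fin (σ.arity o) → A), f (AlgA.interp o x) = AlgB.interp o (f ∘ x)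

/-- An idempotent unary polynomial. -/
def IsIdempotentPoly {σ : Signature} {A : Type} (Alg : UAlg σ A) (e : A → A) : Prop :=
  IsUnaryPolynomial Alg e ∧ ∀ x, e (e x) = e x

/-- A (⊥, δ)-minimal set. -/
def IsMinimalSet {σ : Signature} {A : Type} (Alg : UAlg σ A) (δ : A → A → Prop)
    (U : Set A) : Prop :=
  (∃ e, IsIdempotentPoly Alg e ∧ U = Set.range e ∧ ∃ a b, δ a b ∧ e a ≠ e b) ∧
  ∀ e', IsIdempotentPoly Alg e' → Set.range e' ⊆ U → (∃ a b, δ a b ∧ e' a ≠ e' b) →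
    Set.range e' = U

/-- μ is an atom of the congruence lattice. -/
def IsAtomCong {σ : Signature} {A : Type} (Alg : UAlg σ A) (μ : A → A → Prop) : Prop :=
  IsCongruence Alg μ ∧ μ ≠ (fun a b => a = b) ∧
  ∀ θ, IsCongruence Alg θ → (∀ a b, θ a b → μ a b) → θ = (fun a b => a = b) ∨ θ = μ

/-- A (⊥, μ)-trace in a minimal set U. -/
def IsTrace {A : Type} (μ : A → A → Prop) (U N : Set A) : Prop :=
  (∃ a ∈ U, N = {x ∈ U | μ x a}) ∧ ∃ x ∈ N, ∃ y ∈ N, x ≠ y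

/-- The body of a minimal set: the union of its traces. -/
def Body {A : Type} (μ : A → A → Prop) (U : Set A) : Set A :=
  {x | ∃ N, IsTrace μ U N ∧ x ∈ N}

/-- Polynomial permutations of U (as functions A → A which are bijective on U). -/
def PolPermFun {σ : Signature} {A : Type} (Alg : UAlg σ A) (U : Set A) : Set (A → A) :=
  { p | IsUnaryPolynomial Alg p ∧ Set.BijOn p U U }

/-- Subdirect irreducibility: there is a pair contained in every nontrivial congruence. -/
def IsSI {σ : Signature} {B : Type} (Alg : UAlg σ B) : Prop :=
  ∃ a b : B, a ≠ b ∧ ∀ θ, IsCongruence Alg θ → θ ≠ (fun x y => x = y) → θ a b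

/-- The subalgebra generated by a set. -/
def genSub {σ : Signature} {B : Type} (Alg : UAlg σ B) (s : Set B) : Set B :=
  ⋂₀ {t | IsSubalgebra Alg t ∧ s ⊆ t}

/-- A strongly solvable congruence: connected to ⊥ by strongly abelian covers. -/
def IsStronglySolvable {σ : Signature} {A : Type} (Alg : UAlg σ A)
    (s : A → A → Prop) : Prop :=
  ∃ (n : ℕ) (c : Fin (n + 1) → (A → A → Prop)),
    c 0 = (fun a b => a = b) ∧ c (Fin.last n) = s ∧
    (∀ i, IsCongruence Alg (c i)) ∧
    ∀ i : Fin n, (∀ a b, c i.castSucc a b → c i.succ a b) ∧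
      StronglyAbelianOver Alg (c i.succ) (c i.castSucc)

/-- The set of n-ary term operations of an algebra. -/
def TermFun {σ : Signature} {A : Type} (Alg : UAlg σ A) (n : ℕ) :
    Set ((Fin n → A) → A) :=
  { g | ∃ t : Term σ n, g = fun v => t.eval Alg v }

/-!
Choose a coordinate `i₀` in which `b₁` and `b₂` differ and set `b := b₁ i₀`, `b' := b₂ i₀`.
Since every operation on `U` is polynomial, for each `i` some unary polynomial `pᵢ` sends
`b ↦ b₁ i` and `b' ↦ b₂ i`. Then `s(x, y) := t(x, p₁(y), …, pₘ(y))` is a binary polynomial with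
`s(a, b) = t(a, b₁)` and `s(a, b') = t(a, b₂)` for every `a`, so it inherits the failure.
-/

namespace Term

variable {σ : Signature} {A : Type}

def subst {n k : ℕ} : Term σ n → (Fin n → Term σ k) → Term σ k
  | .var i, f => f i
  | .op o ts, f => .op o fun j => (ts j).subst f

theorem eval_subst (Alg : UAlg σ A) {n k : ℕ} (t : Term σ n) (f : Fin n → Term σ k)
    (v : Fin k → A) : (t.subst f).eval Alg v = t.eval Alg fun i => (f i).eval Alg v := by
  induction t with
  | var i => rfl
  | op o ts ih => exact congrArg (Alg.interp o) (funext ih)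

end Term

namespace IsPolynomial

variable {σ : Signature} {A : Type} {Alg : UAlg σ A}

theorem of_term {k : ℕ} (t : Term σ k) : IsPolynomial Alg (t.eval Alg) :=
  ⟨0, t.subst fun i => .var (Fin.castAdd 0 i), Fin.elim0, fun x => by
    simp only [Term.eval_subst, Term.eval, Fin.append_left]⟩

theorem proj {k : ℕ} (i : Fin k) : IsPolynomial Alg fun x : Fin k → A => x i :=
  of_term (.var i)

theorem comp {n k : ℕ} {f : (Fin n → A) → A} (hf : IsPolynomial Alg f)
    {g : Fin n → (Fin k → A) → A} (hg : ∀ i, IsPolynomial Alg (g i)) :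
    IsPolynomial Alg fun x => f fun i => g i x := by
  obtain ⟨N, tf, pf, hf⟩ := hf
  choose M tg pg hg using hg
  -- the parameters of `f` come first, then those of all `g i`, indexed by a sigma type
  let e : (i : Fin n) × Fin (M i) ≃ Fin (∑ i, M i) := finSigmaFinEquiv
  refine ⟨N + ∑ i, M i,
    tf.subst (Fin.addCases
      (fun i => (tg i).subst (Fin.addCases (fun j => .var (Fin.castAdd _ j))
        fun l => .var (Fin.natAdd k (Fin.natAdd N (e ⟨i, l⟩)))))
      fun l => .var (Fin.natAdd k (Fin.castAdd _ l))),
    Fin.append pf fun j => pg (e.symm j).1 (e.symm j).2, fun x => ?_⟩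
  beta_reduce
  rw [hf, Term.eval_subst]
  congr 1
  funext idx
  induction idx using Fin.addCases with
  | left i =>
    rw [Fin.addCases_left, Fin.append_left, hg, Term.eval_subst]
    congr 1
    funext j
    induction j using Fin.addCases with
    | left j => simp only [Fin.addCases_left, Term.eval, Fin.append_left]
    | right l =>
      simp only [Fin.addCases_right, Term.eval, Fin.append_right]
      rw [Equiv.symm_apply_apply]
  | right l => simp only [Fin.addCases_right, Term.eval, Fin.append_right, Fin.append_left]

end IsPolynomial

def IsPolynomiallyClosed {σ : Signature} {A : Type} (Alg : UAlg σ A) (U : Set A) : Prop :=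
  ∀ (k : ℕ) (g : (Fin k → A) → A), (∀ x, (∀ i, x i ∈ U) → g x ∈ U) →
    ∃ p : (Fin k → A) → A, IsPolynomial Alg p ∧ ∀ x, (∀ i, x i ∈ U) → p x = g x

theorem IsPolynomiallyClosed.exists_interpolating {σ : Signature} {A : Type} {Alg : UAlg σ A}
    {U : Set A} (hU : IsPolynomiallyClosed Alg U) {b b' c c' : A} (hb : b ∈ U) (hb' : b' ∈ U)
    (hbb' : b ≠ b') (hc : c ∈ U) (hc' : c' ∈ U) :
    ∃ p : (Fin 1 → A) → A, IsPolynomial Alg p ∧ p (fun _ => b) = c ∧ p (fun _ => b') = c' := by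
  classical
  obtain ⟨p, hp, hpg⟩ := hU 1 (fun x => if x 0 = b then c else c') fun x _ => by
    split_ifs <;> assumption
  exact ⟨p, hp, by simp [hpg _ fun _ => hb], by simp [hpg _ fun _ => hb', hbb'.symm]⟩

theorem stmt_1_general {σ : Signature} {A : Type} (Alg : UAlg σ A)
    (β γ : A → A → Prop)
    (hγ : IsCongruence Alg γ)
    (U : Set A)
    (hUpoly : ∀ (k : ℕ) (g : (Fin k → A) → A),
      (∀ x, (∀ i, x i ∈ U) → g x ∈ U) →
      ∃ p : (Fin k → A) → A, IsPolynomial Alg p ∧ ∀ x, (∀ i, x i ∈ U) → p x = g x)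
    {m : ℕ} (t : Term σ (1 + m)) (a₁ a₂ : A) (b₁ b₂ : Fin m → A)
    (hb : ∀ i, β (b₁ i) (b₂ i))
    (hbU : ∀ i, b₁ i ∈ U) (hbU' : ∀ i, b₂ i ∈ U)
    (heq : γ (t.eval Alg (Fin.append (fun _ : Fin 1 => a₁) b₁))
             (t.eval Alg (Fin.append (fun _ : Fin 1 => a₁) b₂)))
    (hne : ¬ γ (t.eval Alg (Fin.append (fun _ : Fin 1 => a₂) b₁))
               (t.eval Alg (Fin.append (fun _ : Fin 1 => a₂) b₂))) :
    ∃ (s : (Fin 2 → A) → A) (b b' : A), IsPolynomial Alg s ∧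
      b ∈ U ∧ b' ∈ U ∧ β b b' ∧
      γ (s ![a₁, b]) (s ![a₁, b']) ∧ ¬ γ (s ![a₂, b]) (s ![a₂, b']) := by
  obtain ⟨i₀, hi₀⟩ : ∃ i₀, b₁ i₀ ≠ b₂ i₀ := by
    by_contra! h
    obtain rfl : b₁ = b₂ := funext h
    exact hne (hγ.1.refl _)
  choose p hp hpb hpb' using fun i =>
    IsPolynomiallyClosed.exists_interpolating hUpoly (hbU i₀) (hbU' i₀) hi₀ (hbU i) (hbU' i)
  let s : (Fin 2 → A) → A := fun v =>
    t.eval Alg fun j => Fin.append (fun _ v => v 0) (fun i v => p i fun _ => v 1) j v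
  have hs : ∀ a, s ![a, b₁ i₀] = t.eval Alg (Fin.append (fun _ : Fin 1 => a) b₁) ∧
      s ![a, b₂ i₀] = t.eval Alg (Fin.append (fun _ : Fin 1 => a) b₂) := fun a => by
    constructor <;> refine congrArg (t.eval Alg) (funext fun j => ?_) <;>
      induction j using Fin.addCases <;> simp [hpb, hpb']
  refine ⟨s, b₁ i₀, b₂ i₀, (IsPolynomial.of_term t).comp fun j => ?_, hbU i₀, hbU' i₀, hb i₀,
    by simpa only [hs] using heq, by simpa only [hs] using hne⟩
  induction j using Fin.addCases with
  | left => simpa only [Fin.append_left] using IsPolynomial.proj 0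
  | right i => simpa only [Fin.append_right] using (hp i).comp fun _ => IsPolynomial.proj 1

/-- If TC(α, β; γ) fails with the β-shifted tuples taken from a set U on
which every operation is realized by a polynomial of A, then there is a failure witnessed
by a binary polynomial s(x,y), with the β-shift occurring in a single coordinate. -/
theorem stmt_1 {σ : Signature} {A : Type} (Alg : UAlg σ A)
    (α β γ : A → A → Prop)
    (hβ : IsCongruence Alg β) (hγ : IsCongruence Alg γ)
    (hγβ : ∀ a b, γ a b → β a b)
    (U : Set A)
    (hUpoly : ∀ (k : ℕ) (g : (Fin k → A) → A),
      (∀ x, (∀ i, x i ∈ U) → g x ∈ U) →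
      ∃ p : (Fin k → A) → A, IsPolynomial Alg p ∧ ∀ x, (∀ i, x i ∈ U) → p x = g x)
    {m : ℕ} (t : Term σ (1 + m)) (a₁ a₂ : A) (b₁ b₂ : Fin m → A)
    (ha : α a₁ a₂) (hb : ∀ i, β (b₁ i) (b₂ i))
    (hbU : ∀ i, b₁ i ∈ U) (hbU' : ∀ i, b₂ i ∈ U)
    (heq : γ (t.eval Alg (Fin.append (fun _ : Fin 1 => a₁) b₁))
             (t.eval Alg (Fin.append (fun _ : Fin 1 => a₁) b₂)))
    (hne : ¬ γ (t.eval Alg (Fin.append (fun _ : Fin 1 => a₂) b₁))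
               (t.eval Alg (Fin.append (fun _ : Fin 1 => a₂) b₂))) :
    ∃ (s : (Fin 2 → A) → A) (b b' : A), IsPolynomial Alg s ∧
      b ∈ U ∧ b' ∈ U ∧ β b b' ∧
      γ (s ![a₁, b]) (s ![a₁, b']) ∧ ¬ γ (s ![a₂, b]) (s ![a₂, b']) :=
  stmt_1_general Alg β γ hγ U hUpoly t a₁ a₂ b₁ b₂ hb hbU hbU' heq hne
end

section
/- Let A be an algebra with congruences γ ≤ β such that TC(β, β; γ) holds. Then β is strongly abelian over γ if and only if the following weaker condition holds: for every term t and all tuples ā₁ ≡_β ā₂ and b̄₁ ≡_β b̄₂, if t(ā₁, b̄₁) ≡_γ t(ā₂, b̄₂) then t(ā_i, b̄_j) ≡_γ t(ā₁, b̄₁) for all i, j ∈ {1,2}. -/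
/-
Strong abelianness trivially yields the rectangle condition (take b̄₃ = b̄₁ and b̄₃ = b̄₂).
Conversely, from t(ā₁, b̄₁) ≡_γ t(ā₂, b̄₂) the rectangle condition gives t(ā₁, b̄₂) ≡_γ t(ā₂, b̄₂),
and the term condition, applied with the roles of the two blocks of variables exchanged,
moves the common second argument from b̄₂ to any b̄₃ ≡_β b̄₂.
-/

def Term.rename {σ : Signature} {n m : ℕ} (f : Fin n → Fin m) : Term σ n → Term σ m
  | .var i => .var (f i)
  | .op o ts => .op o fun j => (ts j).rename f

theorem Term.eval_rename {σ : Signature} {A : Type} (Alg : UAlg σ A) {n m : ℕ}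
    (f : Fin n → Fin m) (t : Term σ n) (v : Fin m → A) :
    (t.rename f).eval Alg v = t.eval Alg (v ∘ f) := by
  induction t with
  | var i => rfl
  | op o ts ih => simp [Term.rename, Term.eval, ih]

theorem Fin.append_comp_finAddFlip {α : Type*} {n m : ℕ} (a : Fin n → α) (b : Fin m → α) :
    Fin.append b a ∘ finAddFlip = Fin.append a b := by
  funext i
  refine Fin.addCases (fun i => ?_) (fun j => ?_) i <;>
    simp [finAddFlip_apply_castAdd, finAddFlip_apply_natAdd]

def IsRectangularOver {σ : Signature} {A : Type} (Alg : UAlg σ A) (β γ : A → A → Prop) :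
    Prop :=
  ∀ (n m : ℕ) (t : Term σ (n + m)) (a₁ a₂ : Fin n → A) (b₁ b₂ : Fin m → A),
    (∀ i, β (a₁ i) (a₂ i)) → (∀ i, β (b₁ i) (b₂ i)) →
    γ (t.eval Alg (Fin.append a₁ b₁)) (t.eval Alg (Fin.append a₂ b₂)) →
    (γ (t.eval Alg (Fin.append a₁ b₁)) (t.eval Alg (Fin.append a₁ b₂)) ∧
     γ (t.eval Alg (Fin.append a₁ b₁)) (t.eval Alg (Fin.append a₂ b₁)) ∧
     γ (t.eval Alg (Fin.append a₁ b₁)) (t.eval Alg (Fin.append a₂ b₂)))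

section

variable {σ : Signature} {A : Type} {Alg : UAlg σ A} {α β γ : A → A → Prop}

theorem TermCond.swap (hTC : TermCond Alg α β γ) {n m : ℕ} (t : Term σ (n + m))
    {a₁ a₂ : Fin n → A} {b₁ b₂ : Fin m → A}
    (ha : ∀ i, β (a₁ i) (a₂ i)) (hb : ∀ i, α (b₁ i) (b₂ i))
    (h : γ (t.eval Alg (Fin.append a₁ b₁)) (t.eval Alg (Fin.append a₂ b₁))) :
    γ (t.eval Alg (Fin.append a₁ b₂)) (t.eval Alg (Fin.append a₂ b₂)) := by
  have hflip := hTC m n (t.rename finAddFlip) b₁ b₂ a₁ a₂ hb ha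
  simp only [Term.eval_rename, Fin.append_comp_finAddFlip] at hflip
  exact hflip h

theorem StronglyAbelianOver.isRectangularOver (hβ : Equivalence β) (hγ : Equivalence γ)
    (hSA : StronglyAbelianOver Alg β γ) : IsRectangularOver Alg β γ := by
  intro n m t a₁ a₂ b₁ b₂ ha hb h
  have h₁ := hSA n m t a₁ a₂ b₁ b₂ b₁ ha hb (fun i => hβ.symm (hb i)) h
  have h₂ := hSA n m t a₁ a₂ b₁ b₂ b₂ ha hb (fun i => hβ.refl _) h
  exact ⟨hγ.trans h (hγ.symm h₂), h₁, h⟩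

theorem IsRectangularOver.stronglyAbelianOver (hγ : Equivalence γ)
    (hR : IsRectangularOver Alg β γ) (hTC : TermCond Alg β β γ) :
    StronglyAbelianOver Alg β γ := by
  intro n m t a₁ a₂ b₁ b₂ b₃ ha hb₁₂ hb₂₃ h
  obtain ⟨h₁₂, -, -⟩ := hR n m t a₁ a₂ b₁ b₂ ha hb₁₂ h
  exact hTC.swap t ha hb₂₃ (hγ.trans (hγ.symm h₁₂) h)

end

theorem stmt_3_general {σ : Signature} {A : Type} (Alg : UAlg σ A)
    (β γ : A → A → Prop)
    (hβ : IsCongruence Alg β) (hγ : IsCongruence Alg γ)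
    (hTC : TermCond Alg β β γ) :
    StronglyAbelianOver Alg β γ ↔
      (∀ (n m : ℕ) (t : Term σ (n + m)) (a₁ a₂ : Fin n → A) (b₁ b₂ : Fin m → A),
        (∀ i, β (a₁ i) (a₂ i)) → (∀ i, β (b₁ i) (b₂ i)) →
        γ (t.eval Alg (Fin.append a₁ b₁)) (t.eval Alg (Fin.append a₂ b₂)) →
        (γ (t.eval Alg (Fin.append a₁ b₁)) (t.eval Alg (Fin.append a₁ b₂)) ∧
         γ (t.eval Alg (Fin.append a₁ b₁)) (t.eval Alg (Fin.append a₂ b₁)) ∧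
         γ (t.eval Alg (Fin.append a₁ b₁)) (t.eval Alg (Fin.append a₂ b₂)))) :=
  ⟨StronglyAbelianOver.isRectangularOver hβ.1 hγ.1,
    fun hR => IsRectangularOver.stronglyAbelianOver hγ.1 hR hTC⟩

/-- Assuming TC(β, β; γ), β is strongly abelian over γ iff the weaker
"rectangular" condition holds. -/
theorem stmt_3 {σ : Signature} {A : Type} (Alg : UAlg σ A)
    (β γ : A → A → Prop)
    (hβ : IsCongruence Alg β) (hγ : IsCongruence Alg γ)
    (hγβ : ∀ a b, γ a b → β a b)
    (hTC : TermCond Alg β β γ) :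
    StronglyAbelianOver Alg β γ ↔
      (∀ (n m : ℕ) (t : Term σ (n + m)) (a₁ a₂ : Fin n → A) (b₁ b₂ : Fin m → A),
        (∀ i, β (a₁ i) (a₂ i)) → (∀ i, β (b₁ i) (b₂ i)) →
        γ (t.eval Alg (Fin.append a₁ b₁)) (t.eval Alg (Fin.append a₂ b₂)) →
        (γ (t.eval Alg (Fin.append a₁ b₁)) (t.eval Alg (Fin.append a₁ b₂)) ∧
         γ (t.eval Alg (Fin.append a₁ b₁)) (t.eval Alg (Fin.append a₂ b₁)) ∧
         γ (t.eval Alg (Fin.append a₁ b₁)) (t.eval Alg (Fin.append a₂ b₂)))) :=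
  stmt_3_general Alg β γ hβ hγ hTC
end

section
/- Let Q be a finite abelian group and R a finite ring of endomorphisms of Q (a subring of End(Q)). If Q is subdirectly irreducible as an R-module (i.e., Q has a smallest nonzero R-submodule), then |Q| ≤ |R|. -/
/-!
Pick a nonzero `s₀` in the monolith `S₀` and a character `χ` of `Q` with `χ s₀ ≠ 1`. The map
`r ↦ χ ∘ r` from `R` to the dual group `Q^` is surjective: otherwise, by Pontryagin duality, its
range is annihilated by some `q ≠ 0`, i.e. `χ` is trivial on the submodule `R q`; but `R q`
contains `S₀`, hence `s₀`. Therefore `|Q| = |Q^| ≤ |R|`.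
-/

open Function

namespace AddChar

variable {A B M : Type*} [AddCommGroup A] [AddCommGroup B] [CommMonoid M]

def compAddMonoidHomHom (ψ : AddChar B M) : (A →+ B) →+ AddChar A M where
  toFun := ψ.compAddMonoidHom
  map_zero' := by ext; simp
  map_add' f g := by ext; simp [map_add_eq_mul]

variable {α G : Type*} [AddCommGroup α] [Finite α] [AddCommGroup G]

theorem surjective_of_forall_apply_eq_one (Φ : G →+ AddChar α ℂ)
    (h : ∀ a, (∀ g, Φ g a = 1) → a = 0) : Surjective Φ := by
  by_contra hΦ
  obtain ⟨ψ, hψ⟩ : ∃ ψ, ψ ∉ Φ.range := by simpa [Surjective] using hΦ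
  obtain ⟨Θ, hΘ⟩ : ∃ Θ : AddChar (AddChar α ℂ ⧸ Φ.range) ℂ, Θ ψ ≠ 1 :=
    exists_apply_ne_zero.2 (by simpa [QuotientAddGroup.eq_zero_iff] using hψ)
  -- `Θ ∘ mk'` is trivial on the range of `Φ` but not at `ψ`; by duality it is evaluation at `a`.
  set a := doubleDualEquiv.symm (Θ.compAddMonoidHom (QuotientAddGroup.mk' Φ.range))
  have ha : ∀ φ : AddChar α ℂ, φ a = Θ φ := fun φ => by
    rw [← doubleDualEmb_apply, doubleDualEmb_doubleDualEquiv_symm_apply]; rfl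
  have h0 : a = 0 := h a fun g => by
    rw [ha, (QuotientAddGroup.eq_zero_iff (N := Φ.range) (Φ g)).2 ⟨g, rfl⟩, map_zero_eq_one]
  exact hΘ (by rw [← ha, h0, map_zero_eq_one])

end AddChar

namespace Subring

variable {Q : Type*} [AddCommGroup Q] (R : Subring (AddMonoid.End Q))

/-- The cyclic submodule `R q`. -/
def orbit (q : Q) : AddSubgroup Q :=
  AddMonoidHom.range
    { toFun := fun r : R => (r : AddMonoid.End Q) q, map_zero' := rfl, map_add' := fun _ _ => rfl }

theorem self_mem_orbit (q : Q) : q ∈ R.orbit q := ⟨1, rfl⟩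

theorem orbit_ne_bot {q : Q} (hq : q ≠ 0) : R.orbit q ≠ ⊥ :=
  fun h => hq ((AddSubgroup.mem_bot).1 (h ▸ R.self_mem_orbit q))

theorem apply_mem_orbit (q : Q) : ∀ f ∈ R, ∀ x ∈ R.orbit q, f x ∈ R.orbit q := by
  rintro f hf x ⟨r, rfl⟩
  exact ⟨⟨f, hf⟩ * r, rfl⟩

end Subring

/-- A finite abelian group Q that is subdirectly irreducible as a module
over a ring R of endomorphisms of Q satisfies |Q| ≤ |R|. -/
theorem stmt_7 {Q : Type} [AddCommGroup Q] [Fintype Q]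
    (R : Subring (AddMonoid.End Q))
    (hSI : ∃ S₀ : AddSubgroup Q, S₀ ≠ ⊥ ∧ (∀ f ∈ R, ∀ x ∈ S₀, f x ∈ S₀) ∧
      ∀ S : AddSubgroup Q, (∀ f ∈ R, ∀ x ∈ S, f x ∈ S) → S ≠ ⊥ → S₀ ≤ S) :
    Fintype.card Q ≤ Nat.card R := by
  obtain ⟨S₀, hS₀, -, hS₀_min⟩ := hSI
  obtain ⟨⟨s₀, hs₀⟩, hs₀_ne⟩ := AddSubgroup.ne_bot_iff_exists_ne_zero.1 hS₀
  obtain ⟨χ, hχ⟩ : ∃ χ : AddChar Q ℂ, χ s₀ ≠ 1 :=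
    AddChar.exists_apply_ne_zero.2 (by simpa using hs₀_ne)
  have hsurj : Function.Surjective (χ.compAddMonoidHomHom.comp R.subtype.toAddMonoidHom) := by
    refine AddChar.surjective_of_forall_apply_eq_one _ fun q hq => ?_
    by_contra hq_ne
    obtain ⟨r, rfl⟩ := hS₀_min _ (R.apply_mem_orbit q) (R.orbit_ne_bot hq_ne) hs₀
    exact hχ (hq r)
  have : Finite (AddMonoid.End Q) := .of_injective _ DFunLike.coe_injective
  calc Fintype.card Q = Fintype.card (AddChar Q ℂ) := AddChar.card_eq.symm
    _ = Nat.card (AddChar Q ℂ) := Nat.card_eq_fintype_card.symm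
    _ ≤ Nat.card R := Nat.card_le_card_of_surjective _ hsurj
end

section
/- Let Q be a set with a ternary operation m satisfying the Malcev equations m(x, y, y) = x and m(x, x, y) = y, such that m is 'abelian': for all terms built from m, the term condition TC(⊤, ⊤; ⊥) holds. Fix 0 ∈ Q and define x + y = m(x, 0, y) and −y = m(0, y, 0). Then (Q, +, 0) is an abelian group, and x − y + z = m(x, y, z) for all x, y, z. -/
/-- The signature with a single ternary operation symbol. -/
def malcevSig : Signature := ⟨Unit, fun _ => 3⟩

/-- The algebra (Q, m) for a ternary operation m. -/
def malcevAlg {Q : Type} (m : Q → Q → Q → Q) : UAlg malcevSig Q :=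
  ⟨fun _ (x : Fin 3 → Q) => m (x 0) (x 1) (x 2)⟩

private lemma app13 {Q : Type} (a x y w : Q) :
    Fin.append (![a] : Fin 1 → Q) ![x,y,w] = ![a,x,y,w] := by
  funext i; fin_cases i <;> rfl

private lemma app12 {Q : Type} (a x y : Q) :
    Fin.append (![a] : Fin 1 → Q) ![x,y] = ![a,x,y] := by
  funext i; fin_cases i <;> rfl

/-- An abelian Malcev operation is affine: fixing 0, the operation
x + y := m(x,0,y) with −y := m(0,y,0) makes Q an abelian group, and
m(x,y,z) = x − y + z. -/
theorem stmt_8 {Q : Type} (m : Q → Q → Q → Q)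
    (hm1 : ∀ x y, m x y y = x) (hm2 : ∀ x y, m x x y = y)
    (hab : TermCond (malcevAlg m) (fun _ _ => True) (fun _ _ => True) (fun a b => a = b))
    (z : Q) :
    (∀ x y w : Q, m (m x z y) z w = m x z (m y z w)) ∧
    (∀ x y : Q, m x z y = m y z x) ∧
    (∀ x : Q, m x z z = x) ∧
    (∀ x : Q, m x z (m z x z) = z) ∧
    (∀ x y w : Q, m x y w = m (m x z (m z y z)) z w) := by
  -- commutativity at every middle
  have comm : ∀ a x y : Q, m x a y = m y a x := by
    intro a x y
    have h := hab 1 2 (Term.op () ![.var 1, .var 0, .var 2]) ![y] ![a] ![x,y] ![y,x]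
      (fun _ => trivial) (fun _ => trivial)
    rw [app12, app12, app12, app12] at h
    have h' : m x y y = m y y x := by rw [hm1, hm2]
    exact h h'
  -- key lemma T : m x c (m c y w) = m x y w
  have T : ∀ c x y w : Q, m x c (m c y w) = m x y w := by
    intro c x y w
    have h := hab 1 3 (Term.op () ![.var 1, .var 0, .op () ![.var 0, .var 2, .var 3]])
      ![y] ![c] ![x,y,w] ![m x y w, y, y] (fun _ => trivial) (fun _ => trivial)
    rw [app13, app13, app13, app13] at h
    have h' : m x y (m y y w) = m (m x y w) y (m y y y) := by
      rw [hm2, hm2, hm1]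
    have h2 := h h'
    calc m x c (m c y w) = m (m x y w) c (m c y y) := h2
      _ = m (m x y w) c c := by rw [hm1]
      _ = m x y w := hm1 _ _
  -- associativity at every middle
  have assoc : ∀ c x y w : Q, m (m x c y) c w = m x c (m y c w) := by
    intro c x y w
    have h := hab 1 3 (Term.op () ![.op () ![.var 1, .var 0, .var 2], .var 0, .var 3])
      ![y] ![c] ![x,y,w] ![y,w,x] (fun _ => trivial) (fun _ => trivial)
    rw [app13, app13, app13, app13] at h
    have h' : m (m x y y) y w = m (m y y w) y x := by
      rw [hm1, hm2, comm]
    have h2 := h h'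
    calc m (m x c y) c w = m (m y c w) c x := h2
      _ = m x c (m y c w) := comm _ _ _
  refine ⟨fun x y w => assoc z x y w, fun x y => comm z x y, fun x => hm1 x z, ?_, ?_⟩
  · intro x
    have := T z x x z
    rw [hm2] at this
    exact this
  · intro x y w
    have inner : m x z (m z y z) = m x y z := T z x y z
    rw [inner]
    have h1 : m x y z = m x z (m z y z) := (T z x y z).symm
    rw [h1, assoc]
    have h2 : m (m z y z) z w = m z y w := by
      calc m (m z y z) z w = m w z (m z y z) := comm _ _ _
        _ = m w y z := T z w y z
        _ = m z y w := comm _ _ _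
    rw [h2, T]
end

section
/- Let S be a finite algebra, σ a strongly abelian congruence on S, B a σ-block, and suppose that for every pair b ≠ b' in B there exist a fixed element c ∈ S, a natural number k, a term t in 1 + k variables and parameters p̄ from a fixed finite set P ⊆ S^k such that t(b, p̄) = c iff t(b', p̄) ≠ c. For b ∈ B define G(b) = { (t, p̄) ∈ T × P : t(b, p̄) = c } where T is a finite set of terms containing all terms used above. Then the map b ↦ G(b) is injective; consequently |B| ≤ 2^{|T × P|}. -/
namespace Set

variable {α β : Type*} {f : α → Set β} {s : Set α}

theorem injOn_of_exists_mem_iff_notMem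
    (h : ∀ a ∈ s, ∀ a' ∈ s, a ≠ a' → ∃ x, (x ∈ f a ↔ x ∉ f a')) : InjOn f s := by
  intro a ha a' ha' heq
  by_contra hne
  obtain ⟨x, hx⟩ := h a ha a' ha' hne
  rw [heq] at hx
  exact iff_not_self hx

theorem ncard_le_two_pow_of_injOn {u : Set β} (hu : u.Finite) (hf : ∀ a ∈ s, f a ⊆ u)
    (hinj : InjOn f s) : s.ncard ≤ 2 ^ u.ncard :=
  ncard_powerset u hu ▸ ncard_le_ncard_of_injOn f hf hinj hu.powerset

end Set

theorem stmt_11_general {σs : Signature} {S : Type} (Alg : UAlg σs S)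
    (B : Set S)
    (c : S) (k : ℕ)
    (T : Set (Term σs (k + 1))) (hT : T.Finite)
    (P : Set (Fin k → S)) (hP : P.Finite)
    (hsep : ∀ b ∈ B, ∀ b' ∈ B, b ≠ b' →
      ∃ t ∈ T, ∃ p ∈ P,
        (t.eval Alg (Fin.cons b p) = c ↔ ¬ (t.eval Alg (Fin.cons b' p) = c))) :
    Set.InjOn (fun b => {tp : Term σs (k + 1) × (Fin k → S) |
        tp.1 ∈ T ∧ tp.2 ∈ P ∧ tp.1.eval Alg (Fin.cons b tp.2) = c}) B ∧
    B.ncard ≤ 2 ^ (T ×ˢ P).ncard := by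
  refine ⟨?inj,
    Set.ncard_le_two_pow_of_injOn (hT.prod hP) (fun _ _ _ htp => ⟨htp.1, htp.2.1⟩) ?inj⟩
  refine Set.injOn_of_exists_mem_iff_notMem fun b hb b' hb' hne => ?_
  obtain ⟨t, ht, p, hp, hiff⟩ := hsep b hb b' hb' hne
  exact ⟨(t, p), by simpa [ht, hp] using hiff⟩

/-- For a strongly abelian congruence σ and a σ-block B separated by terms
with parameters from P at a fixed target value c, the map b ↦ G(b) is injective on B, so
|B| ≤ 2^{|T × P|}. -/
theorem stmt_11 {σs : Signature} {S : Type} [Fintype S] (Alg : UAlg σs S)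
    (σ : S → S → Prop) (hσ : IsCongruence Alg σ)
    (hSA : StronglyAbelianOver Alg σ (fun a b => a = b))
    (b₀ : S) (B : Set S) (hB : B = {x | σ x b₀})
    (c : S) (k : ℕ)
    (T : Set (Term σs (k + 1))) (hT : T.Finite)
    (P : Set (Fin k → S)) (hP : P.Finite)
    (hPσ : ∀ p ∈ P, ∀ q ∈ P, ∀ i, σ (p i) (q i))
    (hsep : ∀ b ∈ B, ∀ b' ∈ B, b ≠ b' →
      ∃ t ∈ T, ∃ p ∈ P,
        (t.eval Alg (Fin.cons b p) = c ↔ ¬ (t.eval Alg (Fin.cons b' p) = c))) :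
    Set.InjOn (fun b => {tp : Term σs (k + 1) × (Fin k → S) |
        tp.1 ∈ T ∧ tp.2 ∈ P ∧ tp.1.eval Alg (Fin.cons b tp.2) = c}) B ∧
    B.ncard ≤ 2 ^ (T ×ˢ P).ncard :=
  stmt_11_general Alg B c k T hT P hP hsep
end

section
/- Let B be a finite algebra, π a meet-irreducible congruence with unique upper cover μ, and suppose there is an idempotent unary polynomial e of B with image U = {x, y} a two-element (π, μ)-minimal set such that π restricted to U is trivial and μ = π ∨ Cg(x, y). Then the congruence lattice of B is the disjoint union of the interval [⊥, π] and the interval [Cg(x,y), ⊤]; that is, every congruence θ of B either satisfies θ ≤ π or θ ≥ Cg(x, y). -/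
/-! If θ ≰ π, then θ ∨ π (the reflexive-transitive closure of θ ∪ π) is strictly above
the meet-irreducible π, hence contains μ and so (x, y): there is a chain of θ- and π-links from x
to y. Applying e maps the chain into U = {x, y}; e preserves θ-links, and since π is trivial
on U every π-link collapses, so the image is a θ-chain from e x = x to e y = y. -/

section ReflTransGen

variable {A ι : Type} [DecidableEq ι] {R : A → A → Prop} {f : (ι → A) → A}

theorem reflTransGen_apply_update
    (hR : ∀ v i b, R (v i) b → R (f v) (f (Function.update v i b)))
    (v : ι → A) (i : ι) {b : A} (h : Relation.ReflTransGen R (v i) b) :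
    Relation.ReflTransGen R (f v) (f (Function.update v i b)) := by
  induction h with
  | refl => rw [Function.update_eq_self]
  | @tail b c _ hbc ih =>
    have := hR (Function.update v i b) i c (by rwa [Function.update_self])
    rw [Function.update_idem] at this
    exact ih.tail this

theorem reflTransGen_apply [Fintype ι]
    (hR : ∀ v i b, R (v i) b → R (f v) (f (Function.update v i b)))
    {v w : ι → A} (h : ∀ i, Relation.ReflTransGen R (v i) (w i)) :
    Relation.ReflTransGen R (f v) (f w) := by
  suffices ∀ s : Finset ι, Relation.ReflTransGen R (f v) (f (s.piecewise w v)) by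
    simpa only [Finset.piecewise_univ] using this Finset.univ
  intro s
  induction s using Finset.induction with
  | empty => rw [Finset.piecewise_empty]
  | @insert i s hi ih =>
    rw [Finset.piecewise_insert]
    refine ih.trans (reflTransGen_apply_update hR _ i ?_)
    rw [Finset.piecewise_eq_of_notMem _ _ _ hi]
    exact h i

end ReflTransGen

namespace IsCongruence

variable {σ : Signature} {A : Type} {Alg : UAlg σ A} {r : A → A → Prop}

theorem eval (hr : IsCongruence Alg r) {n : ℕ} (t : Term σ n) {v w : Fin n → A}
    (h : ∀ i, r (v i) (w i)) : r (t.eval Alg v) (t.eval Alg w) := by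
  induction t with
  | var i => exact h i
  | op o ts ih => exact hr.2 o _ _ ih

theorem map_unaryPolynomial (hr : IsCongruence Alg r) {e : A → A}
    (he : IsUnaryPolynomial Alg e) {a b : A} (hab : r a b) : r (e a) (e b) := by
  obtain ⟨n, t, params, he⟩ := he
  rw [show e a = _ from he fun _ => a, show e b = _ from he fun _ => b]
  refine hr.eval t (Fin.addCases (fun _ => ?_) (fun _ => ?_))
  · simpa only [Fin.append_left] using hab
  · simpa only [Fin.append_right] using hr.1.refl _

theorem interp_update {o : σ.ops} (hr : IsCongruence Alg r)
    (v : Fin (σ.arity o) → A) (i : Fin (σ.arity o)) {b : A} (h : r (v i) b) :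
    r (Alg.interp o v) (Alg.interp o (Function.update v i b)) := by
  refine hr.2 o _ _ fun j => ?_
  rcases eq_or_ne j i with rfl | hj
  · simpa only [Function.update_self] using h
  · simpa only [Function.update_of_ne hj] using hr.1.refl _

theorem reflTransGen_or {θ π : A → A → Prop} (hθ : IsCongruence Alg θ)
    (hπ : IsCongruence Alg π) :
    IsCongruence Alg (Relation.ReflTransGen fun a b => θ a b ∨ π a b) := by
  have : Std.Symm fun a b => θ a b ∨ π a b := ⟨fun _ _ h => h.imp hθ.1.symm hπ.1.symm⟩
  refine ⟨⟨fun _ => .refl, symm_of _, .trans⟩, fun o v w h => reflTransGen_apply ?_ h⟩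
  intro v i b hb
  exact hb.imp (hθ.interp_update v i) (hπ.interp_update v i)

theorem apply_of_reflTransGen_or {θ π : A → A → Prop} (hθ : IsCongruence Alg θ)
    {e : A → A} (he : IsUnaryPolynomial Alg e) (hπe : ∀ a b, π a b → e a = e b) {a b : A}
    (hab : Relation.ReflTransGen (fun a b => θ a b ∨ π a b) a b) : θ (e a) (e b) :=
  Relation.reflTransGen_le_of_equivalence_of_le (hθ.1.comap e)
    (fun a b h => h.elim (hθ.map_unaryPolynomial he) fun h =>
      show θ (e a) (e b) from hπe a b h ▸ hθ.1.refl _) a b hab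

end IsCongruence

theorem eq_of_rel_of_mem_pair {A : Type} {π : A → A → Prop} (hπ : Equivalence π) {x y : A}
    (hxy : ¬ π x y) {a b : A} (ha : a ∈ ({x, y} : Set A)) (hb : b ∈ ({x, y} : Set A))
    (hab : π a b) : a = b := by
  rcases ha with rfl | rfl <;> rcases hb with rfl | rfl
  · rfl
  · exact absurd hab hxy
  · exact absurd (hπ.symm hab) hxy
  · rfl

theorem stmt_12_general {σ : Signature} {B : Type} (Alg : UAlg σ B)
    (π μ : B → B → Prop) (hπ : IsCongruence Alg π)
    (x y : B)
    (e : B → B) (he : IsUnaryPolynomial Alg e) (hidem : ∀ a, e (e a) = e a)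
    (hrange : Set.range e = {x, y})
    (hπxy : ¬ π x y)
    (hμdef : μ = congClosure Alg
      (fun a b => π a b ∨ (a = x ∧ b = y) ∨ (a = y ∧ b = x) ∨ a = b))
    (hMI : ∀ θ, IsCongruence Alg θ → (∀ a b, π a b → θ a b) → θ ≠ π →
      ∀ a b, μ a b → θ a b) :
    ∀ θ, IsCongruence Alg θ → (∀ a b, θ a b → π a b) ∨ θ x y := by
  intro θ hθ
  refine or_iff_not_imp_left.2 fun hθπ => ?_
  push Not at hθπ
  obtain ⟨a, b, hθab, hπab⟩ := hθπ
  have hμxy : μ x y := hμdef ▸ fun r _ hR => hR x y (.inr (.inl ⟨rfl, rfl⟩))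
  have hjoin : Relation.ReflTransGen (fun a b => θ a b ∨ π a b) x y :=
    hMI _ (hθ.reflTransGen_or hπ) (fun _ _ h => .single (.inr h))
      (fun h => hπab (h ▸ .single (.inl hθab))) x y hμxy
  have hfix : ∀ c ∈ ({x, y} : Set B), e c = c := by
    rw [← hrange]
    rintro _ ⟨c, rfl⟩
    exact hidem c
  have hπe : ∀ a b, π a b → e a = e b := fun a b h =>
    eq_of_rel_of_mem_pair hπ.1 hπxy (hrange ▸ ⟨a, rfl⟩) (hrange ▸ ⟨b, rfl⟩)
      (hπ.map_unaryPolynomial he h)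
  simpa only [hfix x (.inl rfl), hfix y (.inr rfl)] using
    hθ.apply_of_reflTransGen_or he hπe hjoin

/-- If π is meet-irreducible with unique upper cover μ = π ∨ Cg(x,y) and
there is an idempotent unary polynomial e with two-element image {x, y} on which π is
trivial, then every congruence θ satisfies θ ≤ π or θ ≥ Cg(x, y) (i.e., θ x y). -/
theorem stmt_12 {σ : Signature} {B : Type} [Fintype B] (Alg : UAlg σ B)
    (π μ : B → B → Prop) (hπ : IsCongruence Alg π) (hμ : IsCongruence Alg μ)
    (x y : B) (hxy : x ≠ y)
    (e : B → B) (he : IsUnaryPolynomial Alg e) (hidem : ∀ a, e (e a) = e a)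
    (hrange : Set.range e = {x, y})
    (hπxy : ¬ π x y)
    (hπμ : ∀ a b, π a b → μ a b) (hπμ' : π ≠ μ)
    (hμdef : μ = congClosure Alg
      (fun a b => π a b ∨ (a = x ∧ b = y) ∨ (a = y ∧ b = x) ∨ a = b))
    (hMI : ∀ θ, IsCongruence Alg θ → (∀ a b, π a b → θ a b) → θ ≠ π →
      ∀ a b, μ a b → θ a b) :
    ∀ θ, IsCongruence Alg θ → (∀ a b, θ a b → π a b) ∨ θ x y :=
  stmt_12_general Alg π μ hπ x y e he hidem hrange hπxy hμdef hMI
end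

section
/- Let K be a finite set of finite algebras closed under homomorphic images and subalgebras, and let V = HSP(K). Then every finite subdirectly irreducible algebra S ∈ V whose monolith cover (π ≺ μ in a representation S ≅ B/π) has a two-element minimal set U = {x, y} with π trivial on U (boolean type behavior as in the previous statement) belongs to HS(K); in particular, |S| is bounded by the maximum cardinality of members of K. -/
open Relation

section Congruences

variable {σ : Signature} {A : Type} {Alg : UAlg σ A} {θ π : A → A → Prop}

theorem IsCongruence.eval_term (hθ : IsCongruence Alg θ) {n : ℕ} (t : Term σ n)
    {v w : Fin n → A} (h : ∀ i, θ (v i) (w i)) : θ (t.eval Alg v) (t.eval Alg w) := by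
  induction t with
  | var i => exact h i
  | op o ts ih => exact hθ.2 o _ _ ih

theorem IsCongruence.map_unaryPolynomial_s13 (hθ : IsCongruence Alg θ) {e : A → A}
    (he : IsUnaryPolynomial Alg e) {a b : A} (hab : θ a b) : θ (e a) (e b) := by
  obtain ⟨n, t, params, ht⟩ := he
  rw [show e a = _ from ht ![a], show e b = _ from ht ![b]]
  refine hθ.eval_term t fun i => Fin.addCases (fun j => ?_) (fun j => ?_) i
  · simpa [Fin.fin_one_eq_zero j] using hab
  · simpa using hθ.1.refl _

theorem IsHom.isCongruence_ker {B : Type} {AlgB : UAlg σ B} {f : A → B}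
    (hf : IsHom Alg AlgB f) : IsCongruence Alg fun a b => f a = f b := by
  refine ⟨⟨fun _ => rfl, Eq.symm, Eq.trans⟩, fun o x y h => ?_⟩
  show f _ = f _
  rw [hf, hf]
  exact congrArg _ (funext h)

def IsTranslationCompatible (Alg : UAlg σ A) (R : A → A → Prop) : Prop :=
  ∀ (o : σ.ops) (x : Fin (σ.arity o) → A) (i : Fin (σ.arity o)) (a b : A), R a b →
    R (Alg.interp o (Function.update x i a)) (Alg.interp o (Function.update x i b))

theorem IsCongruence.isTranslationCompatible (hθ : IsCongruence Alg θ) :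
    IsTranslationCompatible Alg θ := fun o x i a b h =>
  hθ.2 o _ _ fun j => by
    rcases eq_or_ne j i with rfl | hj
    · simpa using h
    · simpa [Function.update_of_ne hj] using hθ.1.refl (x j)

variable {R : A → A → Prop}

theorem IsTranslationCompatible.reflTransGen (hR : IsTranslationCompatible Alg R) :
    IsTranslationCompatible Alg (ReflTransGen R) := by
  intro o x i a b h
  induction h with
  | refl => rfl
  | tail _ hcd ih => exact ih.tail (hR o x i _ _ hcd)

theorem IsTranslationCompatible.interp_rel (hR : IsTranslationCompatible Alg R)
    (hrefl : ∀ a, R a a) (htrans : ∀ {a b c}, R a b → R b c → R a c) {o : σ.ops}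
    {x y : Fin (σ.arity o) → A} (h : ∀ i, R (x i) (y i)) :
    R (Alg.interp o x) (Alg.interp o y) := by
  classical
  suffices ∀ T : Finset (Fin (σ.arity o)), R (Alg.interp o x) (Alg.interp o (T.piecewise y x)) by
    simpa using this Finset.univ
  intro T
  induction T using Finset.induction_on with
  | empty => simpa using hrefl _
  | insert i T hiT ih =>
    have step := hR o (T.piecewise y x) i _ _ (h i)
    rw [Function.update_eq_self_iff.2 (Finset.piecewise_eq_of_notMem _ _ _ hiT).symm] at step
    rw [Finset.piecewise_insert]
    exact htrans ih step

theorem IsCongruence.join (hθ : IsCongruence Alg θ) (hπ : IsCongruence Alg π) :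
    IsCongruence Alg (ReflTransGen fun a b => θ a b ∨ π a b) := by
  have : Std.Symm fun a b => θ a b ∨ π a b := ⟨fun _ _ h => h.imp hθ.1.symm hπ.1.symm⟩
  have hR : IsTranslationCompatible Alg fun a b => θ a b ∨ π a b := fun o x i a b h =>
    h.imp (hθ.isTranslationCompatible o x i a b) (hπ.isTranslationCompatible o x i a b)
  exact ⟨⟨fun _ => .refl, fun h => ReflTransGen.stdSymm.symm _ _ h, .trans⟩,
    fun _ _ _ => hR.reflTransGen.interp_rel (fun _ => .refl) .trans⟩

end Congruences

section MinimalSet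

variable {σ : Signature} {A : Type} {Alg : UAlg σ A} {e : A → A}

theorem IsUnaryPolynomial.apply_eq_of_rel (he : IsUnaryPolynomial Alg e)
    {π : A → A → Prop} (hπ : IsCongruence Alg π)
    (htriv : ∀ u ∈ Set.range e, ∀ v ∈ Set.range e, π u v → u = v) {a b : A} (h : π a b) :
    e a = e b :=
  htriv _ ⟨a, rfl⟩ _ ⟨b, rfl⟩ (hπ.map_unaryPolynomial_s13 he h)

theorem IsUnaryPolynomial.rel_of_reflTransGen (he : IsUnaryPolynomial Alg e)
    {θ π : A → A → Prop} (hθ : IsCongruence Alg θ) (hcollapse : ∀ a b, π a b → e a = e b)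
    {a b : A} (h : ReflTransGen (fun a b => θ a b ∨ π a b) a b) : θ (e a) (e b) := by
  induction h with
  | refl => exact hθ.1.refl _
  | tail _ hcd ih =>
    rcases hcd with hcd | hcd
    · exact hθ.1.trans ih (hθ.map_unaryPolynomial_s13 he hcd)
    · exact hcollapse _ _ hcd ▸ ih

/-- The splitting `Con B = [⊥, π] ⊔ [Cg(x, y), ⊤]` given by a two-element minimal set. -/
theorem IsCongruence.rel_of_not_le {θ π : A → A → Prop} (hθ : IsCongruence Alg θ)
    (hπ : IsCongruence Alg π) {x y : A}
    (hMI : ∀ ρ, IsCongruence Alg ρ → (∀ a b, π a b → ρ a b) → ρ ≠ π → ρ x y)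
    (he : IsUnaryPolynomial Alg e) (hcollapse : ∀ a b, π a b → e a = e b)
    (hex : e x = x) (hey : e y = y) (hθπ : ∃ a b, θ a b ∧ ¬ π a b) : θ x y := by
  obtain ⟨a, b, hab, hnab⟩ := hθπ
  have hjoin := hMI _ (hθ.join hπ) (fun a b h => .single (Or.inr h)) fun h =>
    hnab (h ▸ ReflTransGen.single (Or.inl hab))
  simpa [hex, hey] using he.rel_of_reflTransGen hθ hcollapse hjoin

end MinimalSet

section Subalgebras

variable {σ : Signature} {B C S : Type} {AlgB : UAlg σ B} {AlgC : UAlg σ C} {AlgS : UAlg σ S}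

/-- `S ∈ HS(C)`. -/
def IsHomImageOfSub (AlgC : UAlg σ C) (AlgS : UAlg σ S) : Prop :=
  ∃ (s : Set C) (hs : IsSubalgebra AlgC s) (f : s → S),
    IsHom (UAlg.sub AlgC s hs) AlgS f ∧ Function.Surjective f

theorem IsHomImageOfSub.card_le [Finite C] (h : IsHomImageOfSub AlgC AlgS) :
    Nat.card S ≤ Nat.card C := by
  obtain ⟨s, -, f, -, hfs⟩ := h
  exact (Nat.card_le_card_of_surjective f hfs).trans
    (Nat.card_le_card_of_injective _ Subtype.val_injective)

theorem IsSubalgebra.image {s : Set B} (hs : IsSubalgebra AlgB s) {r : B → C}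
    (hr : IsHom AlgB AlgC r) : IsSubalgebra AlgC (r '' s) := by
  intro o x hx
  choose v hvs hvx using hx
  exact ⟨AlgB.interp o v, hs o v hvs, (hr o v).trans (congrArg _ (funext hvx))⟩

theorem IsHom.imageFactorization {s : Set B} (hs : IsSubalgebra AlgB s) {r : B → C}
    (hr : IsHom AlgB AlgC r) :
    IsHom (UAlg.sub AlgB s hs) (UAlg.sub AlgC (r '' s) (hs.image hr))
      (Set.imageFactorization r s) :=
  fun o _ => Subtype.ext (hr o _)

theorem IsHom.exists_factor {q : B → C} (hq : IsHom AlgB AlgC q)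
    (hqs : Function.Surjective q) {f : B → S} (hf : IsHom AlgB AlgS f)
    (hfs : Function.Surjective f) (hker : ∀ a b, q a = q b → f a = f b) :
    ∃ f' : C → S, IsHom AlgC AlgS f' ∧ Function.Surjective f' := by
  have hfac : ∀ a, f (Function.surjInv hqs (q a)) = f a := fun a =>
    hker _ _ (Function.surjInv_eq hqs _)
  refine ⟨f ∘ Function.surjInv hqs, fun o x => ?_, fun s => ?_⟩
  · set y := Function.surjInv hqs ∘ x
    have hx : q ∘ y = x := funext fun j => Function.surjInv_eq hqs _
    calc f (Function.surjInv hqs (AlgC.interp o x))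
        = f (Function.surjInv hqs (q (AlgB.interp o y))) := by rw [hq, hx]
      _ = AlgS.interp o (f ∘ y) := by rw [hfac, hf]
  · obtain ⟨b, rfl⟩ := hfs s
    exact ⟨q b, hfac b⟩

theorem IsHom.isHomImageOfSub_of_ker_le {s : Set B} (hs : IsSubalgebra AlgB s) {r : B → C}
    (hr : IsHom AlgB AlgC r) {f : s → S} (hf : IsHom (UAlg.sub AlgB s hs) AlgS f)
    (hfs : Function.Surjective f) (hker : ∀ a b : s, r a = r b → f a = f b) :
    IsHomImageOfSub AlgC AlgS :=
  ⟨_, hs.image hr, (hr.imageFactorization hs).exists_factor Set.imageFactorization_surjective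
    hf hfs fun a b h => hker a b (congrArg Subtype.val h)⟩

end Subalgebras

theorem Fin.eq_of_forall_succAbove {n : ℕ} (hn : n ≠ 0) {β : Fin (n + 1) → Type*}
    {u v : ∀ j, β j}
    (h : ∀ i : Fin (n + 1), (fun k => u (i.succAbove k)) = fun k => v (i.succAbove k)) :
    u = v := by
  have : Nontrivial (Fin (n + 1)) := Fin.nontrivial_iff_two_le.2 (by omega)
  funext j
  obtain ⟨i, hij⟩ := exists_ne j
  obtain ⟨k, rfl⟩ := Fin.exists_succAbove_eq hij.symm
  exact congrFun (h i) k

section Products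

variable {σ : Signature} {ι S : Type} {A : ι → Type} {AlgA : ∀ i, UAlg σ (A i)}
  {AlgS : UAlg σ S}

theorem UAlg.isHom_pi_eval (i : ι) : IsHom (UAlg.pi AlgA) (AlgA i) fun v => v i :=
  fun _ _ => rfl

theorem UAlg.isHom_pi_comp {κ : Type} (m : κ → ι) :
    IsHom (UAlg.pi AlgA) (UAlg.pi fun k => AlgA (m k)) fun v k => v (m k) :=
  fun _ _ => rfl

variable {n : ℕ} {g : Fin (n + 1) → ι} {B : Set (∀ j, A (g j))}
  (hB : IsSubalgebra (UAlg.pi fun j => AlgA (g j)) B)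

theorem isHom_sub_comp_succAbove (i : Fin (n + 1)) :
    IsHom (UAlg.sub _ B hB) (UAlg.pi fun k => AlgA (g (i.succAbove k)))
      fun a k => a.1 (i.succAbove k) :=
  fun _ _ => rfl

theorem exists_comp_succAbove_eq_of_minimal {f : B → S}
    (hf : IsHom (UAlg.sub _ B hB) AlgS f) (hfs : Function.Surjective f)
    (hmin : ∀ (q : ℕ) (g' : Fin q → ι),
      IsHomImageOfSub (UAlg.pi fun j => AlgA (g' j)) AlgS → n + 1 ≤ q)
    (i : Fin (n + 1)) :
    ∃ a b : B, (fun k => a.1 (i.succAbove k)) = (fun k => b.1 (i.succAbove k)) ∧ f a ≠ f b := by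
  by_contra! h
  have := hmin n (g ∘ i.succAbove)
    ((UAlg.isHom_pi_comp i.succAbove).isHomImageOfSub_of_ker_le hB hf hfs h)
  omega

end Products

theorem stmt_13_general {σ : Signature} {ι : Type}
    (A : ι → Type) [∀ i, Fintype (A i)] (AlgA : ∀ i, UAlg σ (A i))
    (S : Type) (AlgS : UAlg σ S)
    -- a representation of S as a quotient of a subalgebra of a product of p members of K:
    (p : ℕ) (g : Fin p → ι)
    (Bset : Set (∀ j, A (g j)))
    (hBsub : IsSubalgebra (UAlg.pi fun j => AlgA (g j)) Bset)
    (f : Bset → S)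
    (hf : IsHom (UAlg.sub (UAlg.pi fun j => AlgA (g j)) Bset hBsub) AlgS f)
    (hfs : Function.Surjective f)
    -- minimality of the number p of factors:
    (hmin : ∀ (q : ℕ) (g' : Fin q → ι) (B' : Set (∀ j, A (g' j)))
      (hB' : IsSubalgebra (UAlg.pi fun j => AlgA (g' j)) B')
      (f' : B' → S), IsHom (UAlg.sub (UAlg.pi fun j => AlgA (g' j)) B' hB') AlgS f' →
      Function.Surjective f' → p ≤ q)
    -- boolean-type monolith data over π = ker f: a two-element (π, μ)-minimal set {x, y}:
    (x y : Bset) (hxy : f x ≠ f y)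
    (e : Bset → Bset)
    (he : IsUnaryPolynomial (UAlg.sub (UAlg.pi fun j => AlgA (g j)) Bset hBsub) e)
    (hidem : ∀ a, e (e a) = e a) (hrange : Set.range e = {x, y})
    -- π is meet-irreducible: every congruence strictly above π contains the pair (x, y):
    (hMI : ∀ θ, IsCongruence (UAlg.sub (UAlg.pi fun j => AlgA (g j)) Bset hBsub) θ →
      (∀ a b : Bset, f a = f b → θ a b) → θ ≠ (fun a b => f a = f b) → θ x y) :
    (∃ (i : ι) (s : Set (A i)) (hs : IsSubalgebra (AlgA i) s) (h : s → S),
      IsHom (UAlg.sub (AlgA i) s hs) AlgS h ∧ Function.Surjective h) ∧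
    (∃ i : ι, Nat.card S ≤ Nat.card (A i)) := by
  have hπ := hf.isCongruence_ker
  have hex : e x = x := by
    obtain ⟨z, hz⟩ : x ∈ Set.range e := hrange ▸ Set.mem_insert x {y}
    rw [← hz, hidem]
  have hey : e y = y := by
    obtain ⟨z, hz⟩ : y ∈ Set.range e := hrange ▸ Set.mem_insert_of_mem x rfl
    rw [← hz, hidem]
  have htriv : ∀ u ∈ Set.range e, ∀ v ∈ Set.range e, f u = f v → u = v := by
    rw [hrange]
    rintro u (rfl | rfl) v (rfl | rfl) h
    exacts [rfl, absurd h hxy, absurd h.symm hxy, rfl]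
  have hcollapse : ∀ a b, f a = f b → e a = e b := fun _ _ => he.apply_eq_of_rel hπ htriv
  obtain ⟨n, rfl⟩ : ∃ n, p = n + 1 := Nat.exists_eq_succ_of_ne_zero fun hp => by
    subst hp
    exact hxy (congrArg f (Subsingleton.elim x y))
  have hagree (i : Fin (n + 1)) :
      (fun k => x.1 (i.succAbove k)) = fun k => y.1 (i.succAbove k) :=
    (isHom_sub_comp_succAbove hBsub i).isCongruence_ker.rel_of_not_le hπ hMI he hcollapse hex
      hey (exists_comp_succAbove_eq_of_minimal hBsub hf hfs
        (fun q g' ⟨B', hB', f', hf', hfs'⟩ => hmin q g' B' hB' f' hf' hfs') i)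
  obtain rfl : n = 0 := by
    by_contra hn
    exact hxy (congrArg f (Subtype.ext (Fin.eq_of_forall_succAbove hn hagree)))
  have hS : IsHomImageOfSub (AlgA (g 0)) AlgS :=
    (UAlg.isHom_pi_eval 0).isHomImageOfSub_of_ker_le hBsub hf hfs fun a b h =>
      congrArg f (Subtype.ext (funext fun j => Fin.fin_one_eq_zero j ▸ h))
  exact ⟨⟨g 0, hS⟩, g 0, hS.card_le⟩

/-- Let K = {A_i} be a finite set of finite algebras closed under H and S,
V = HSP(K). A finite subdirectly irreducible S ∈ V whose monolith cover has a two-element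
minimal set (boolean behaviour), presented minimally as a quotient of B ≤ ∏ A_{g(j)},
belongs to HS(K); in particular |S| is bounded by the largest member of K. -/
theorem stmt_13 {σ : Signature} {ι : Type} [Fintype ι]
    (A : ι → Type) [∀ i, Fintype (A i)] (AlgA : ∀ i, UAlg σ (A i))
    -- K is closed under homomorphic images and subalgebras:
    (hHS : ∀ (i : ι) (s : Set (A i)) (hs : IsSubalgebra (AlgA i) s)
      (C : Type) (AlgC : UAlg σ C) (f : s → C),
      IsHom (UAlg.sub (AlgA i) s hs) AlgC f → Function.Surjective f →
      ∃ (j : ι) (φ : C → A j), IsHom AlgC (AlgA j) φ ∧ Function.Bijective φ)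
    (S : Type) [Fintype S] (AlgS : UAlg σ S)
    -- a representation of S as a quotient of a subalgebra of a product of p members of K:
    (p : ℕ) (g : Fin p → ι)
    (Bset : Set (∀ j, A (g j)))
    (hBsub : IsSubalgebra (UAlg.pi fun j => AlgA (g j)) Bset)
    (f : Bset → S)
    (hf : IsHom (UAlg.sub (UAlg.pi fun j => AlgA (g j)) Bset hBsub) AlgS f)
    (hfs : Function.Surjective f)
    -- minimality of the number p of factors:
    (hmin : ∀ (q : ℕ) (g' : Fin q → ι) (B' : Set (∀ j, A (g' j)))
      (hB' : IsSubalgebra (UAlg.pi fun j => AlgA (g' j)) B')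
      (f' : B' → S), IsHom (UAlg.sub (UAlg.pi fun j => AlgA (g' j)) B' hB') AlgS f' →
      Function.Surjective f' → p ≤ q)
    -- boolean-type monolith data over π = ker f: a two-element (π, μ)-minimal set {x, y}:
    (x y : Bset) (hxy : f x ≠ f y)
    (e : Bset → Bset)
    (he : IsUnaryPolynomial (UAlg.sub (UAlg.pi fun j => AlgA (g j)) Bset hBsub) e)
    (hidem : ∀ a, e (e a) = e a) (hrange : Set.range e = {x, y})
    -- π is meet-irreducible: every congruence strictly above π contains the pair (x, y):
    (hMI : ∀ θ, IsCongruence (UAlg.sub (UAlg.pi fun j => AlgA (g j)) Bset hBsub) θ →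
      (∀ a b : Bset, f a = f b → θ a b) → θ ≠ (fun a b => f a = f b) → θ x y) :
    (∃ (i : ι) (s : Set (A i)) (hs : IsSubalgebra (AlgA i) s) (h : s → S),
      IsHom (UAlg.sub (AlgA i) s hs) AlgS h ∧ Function.Surjective h) ∧
    (∃ i : ι, Nat.card S ≤ Nat.card (A i)) :=
  stmt_13_general A AlgA S AlgS p g Bset hBsub f hf hfs hmin x y hxy e he hidem hrange hMI
end
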